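/- arXiv:1211.0657 — 4 statements merged into one kernel-verified Lean document; each statement's English description precedes it below -/
import Mathlib

section
/- Fix ε > 0 and let p(z) = z⁴ + (1+ε)z³ - (1/t)(z² - z) + √(2ε+ε²) for a nonzero complex number t. Suppose p has roots z₀ = r e^{iθ} (r > 0) and -1/z̄₀ together with two further roots z₁, z₂. Then, with w = r - 1/r + e^{iθ}, the relation e^{2iθ}(|w|² + 1) + ε e^{iθ} w - √(2ε+ε²) e^{-iθ}(w - 2cos θ) = 0 holds. -/
/-!
Since the coefficients of `z²` and `z` in `p` are opposite, the elementary symmetric functions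
of the roots satisfy `e₂ = e₃`. Grouping the roots as `{z₀, -1/z̄₀}` and `{z₁, z₂}` and eliminating
the second pair through `e₁` and `e₄` leaves one relation between `z₀ - 1/z̄₀ = (r - 1/r) e^{iθ}`
and `-z₀/z̄₀ = -e^{2iθ}`; on the unit circle `conj e^{iθ} = e^{-iθ}`, which turns it into the
stated identity.
-/

open Complex ComplexConjugate

theorem vieta_of_quartic_eq {K : Type*} [Field K] [CharZero K] {c₃ c₂ c₁ c₀ a b c d : K}
    (h : ∀ z, z ^ 4 + c₃ * z ^ 3 + c₂ * z ^ 2 + c₁ * z + c₀ =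
      (z - a) * (z - b) * (z - c) * (z - d)) :
    a + b + (c + d) = -c₃ ∧ a * b + (a + b) * (c + d) + c * d = c₂ ∧
      a * b * (c + d) + (a + b) * (c * d) = -c₁ ∧ a * b * (c * d) = c₀ := by
  have h0 := h 0
  have h1 := h 1
  have h2 := h 2
  have hm1 := h (-1)
  have hm2 := h (-2)
  refine ⟨?_, ?_, ?_, ?_⟩
  · linear_combination (h2 - hm2) / 12 - (h1 - hm1) / 6
  · linear_combination h0 - (h1 + hm1) / 2
  · linear_combination 2 * (h1 - hm1) / 3 - (h2 - hm2) / 12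
  · linear_combination -h0

theorem root_pair_relation_of_quartic_eq {K : Type*} [Field K] [CharZero K] {α β γ a b c d : K}
    (h : ∀ z, z ^ 4 + α * z ^ 3 - β * (z ^ 2 - z) + γ = (z - a) * (z - b) * (z - c) * (z - d)) :
    (a * b) ^ 2 + a * b * (a * b - (a + b)) * (a + b + α) + (1 - (a + b)) * γ = 0 := by
  obtain ⟨e₁, e₂, e₃, e₄⟩ := vieta_of_quartic_eq (c₃ := α) (c₂ := -β) (c₁ := β) (c₀ := γ)
    fun z ↦ by rw [← h z]; ring
  linear_combination a * b * (e₂ - e₃) + a * b * (a * b - (a + b)) * e₁ + (a + b - 1) * e₄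

theorem conj_exp_ofReal_mul_I (θ : ℝ) : conj (exp (θ * I)) = (exp (θ * I))⁻¹ := by
  rw [← exp_conj, map_mul, conj_ofReal, conj_I, mul_neg, exp_neg]

theorem stmt5_general (ε : ℝ) (t : ℂ)
    (r θ : ℝ) (hr : 0 < r) (z₀ z₁ z₂ : ℂ)
    (hz₀ : z₀ = (r : ℂ) * Complex.exp (θ * Complex.I))
    (hfact : ∀ z : ℂ,
      z ^ 4 + (1 + (ε : ℂ)) * z ^ 3 - (1 / t) * (z ^ 2 - z)
          + (Real.sqrt (2 * ε + ε ^ 2) : ℂ)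
        = (z - z₀) * (z - (-1 / starRingEnd ℂ z₀)) * (z - z₁) * (z - z₂)) :
    Complex.exp (2 * θ * Complex.I) *
        ((‖(r : ℂ) - 1 / (r : ℂ) + Complex.exp (θ * Complex.I)‖ : ℝ) ^ 2 + 1)
      + (ε : ℂ) * Complex.exp (θ * Complex.I) *
          ((r : ℂ) - 1 / (r : ℂ) + Complex.exp (θ * Complex.I))
      - (Real.sqrt (2 * ε + ε ^ 2) : ℂ) * Complex.exp (-θ * Complex.I) *
          (((r : ℂ) - 1 / (r : ℂ) + Complex.exp (θ * Complex.I)) - 2 * (Real.cos θ : ℂ))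
      = 0 := by
  have hpair := root_pair_relation_of_quartic_eq hfact
  have hconj := conj_exp_ofReal_mul_I θ
  have h2θ : exp (2 * θ * I) = exp (θ * I) ^ 2 := by rw [← exp_nat_mul]; push_cast; ring_nf
  have hcos : (Real.cos θ : ℂ) = (exp (θ * I) + (exp (θ * I))⁻¹) / 2 := by
    rw [ofReal_cos, cos, neg_mul, exp_neg]
  have hr0 : (r : ℂ) ≠ 0 := ofReal_ne_zero.2 hr.ne'
  have hu : exp (θ * I) ≠ 0 := exp_ne_zero _
  rw [hz₀, map_mul, conj_ofReal, hconj] at hpair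
  rw [← mul_conj', map_add, map_sub, map_div₀, map_one, conj_ofReal, hconj, h2θ, neg_mul, exp_neg,
    hcos]
  field_simp at hpair ⊢
  linear_combination hpair

/-- Vieta elimination: if `p(z) = z⁴ + (1+ε)z³ - (1/t)(z²-z) + √(2ε+ε²)` has roots
`z₀ = r e^{iθ}` and `-1/z̄₀` together with `z₁, z₂`, then with `w = r - 1/r + e^{iθ}` the
relation `e^{2iθ}(|w|²+1) + ε e^{iθ} w - √(2ε+ε²) e^{-iθ}(w - 2cos θ) = 0` holds. -/
theorem stmt5 (ε : ℝ) (hε : 0 < ε) (t : ℂ) (ht : t ≠ 0)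
    (r θ : ℝ) (hr : 0 < r) (z₀ z₁ z₂ : ℂ)
    (hz₀ : z₀ = (r : ℂ) * Complex.exp (θ * Complex.I))
    (hfact : ∀ z : ℂ,
      z ^ 4 + (1 + (ε : ℂ)) * z ^ 3 - (1 / t) * (z ^ 2 - z)
          + (Real.sqrt (2 * ε + ε ^ 2) : ℂ)
        = (z - z₀) * (z - (-1 / starRingEnd ℂ z₀)) * (z - z₁) * (z - z₂)) :
    Complex.exp (2 * θ * Complex.I) *
        ((‖(r : ℂ) - 1 / (r : ℂ) + Complex.exp (θ * Complex.I)‖ : ℝ) ^ 2 + 1)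
      + (ε : ℂ) * Complex.exp (θ * Complex.I) *
          ((r : ℂ) - 1 / (r : ℂ) + Complex.exp (θ * Complex.I))
      - (Real.sqrt (2 * ε + ε ^ 2) : ℂ) * Complex.exp (-θ * Complex.I) *
          (((r : ℂ) - 1 / (r : ℂ) + Complex.exp (θ * Complex.I)) - 2 * (Real.cos θ : ℂ))
      = 0 :=
  stmt5_general ε t r θ hr z₀ z₁ z₂ hz₀ hfact
end

section
/- There is a constant c > 0 with (|w|² + 1)/(|w| + 1) ≥ c for all complex w; consequently there exists ε₀ > 0 such that for all 0 < ε < ε₀, all r > 0 and all real θ, with w = r - 1/r + e^{iθ}, one has e^{2iθ}(|w|² + 1) + ε e^{iθ} w - √(2ε+ε²) e^{-iθ}(w - 2cos θ) ≠ 0. -/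
open Complex

theorem half_le_sq_add_one_div_add_one {x : ℝ} (hx : 0 ≤ x) : 1 / 2 ≤ (x ^ 2 + 1) / (x + 1) := by
  rw [le_div_iff₀ (by positivity)]
  nlinarith [sq_nonneg (x - 1 / 2)]

theorem sqrt_two_mul_add_sq_le_quarter {ε : ℝ} (hε₀ : 0 ≤ ε) (hε : ε ≤ 1 / 40) :
    √(2 * ε + ε ^ 2) ≤ 1 / 4 :=
  Real.sqrt_le_iff.mpr ⟨by norm_num, by nlinarith⟩

/-- The dominant term `u (|w|² + 1)` beats the perturbation, of size at most
`ε |w| + s (|w| + 2) ≤ |w|/2 + 1/2 < |w|² + 1`. -/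
theorem unit_mul_norm_sq_add_one_add_perturbation_ne_zero {u v z w d : ℂ} {ε s : ℝ}
    (hu : ‖u‖ = 1) (hv : ‖v‖ = 1) (hz : ‖z‖ = 1) (hd : ‖d‖ ≤ 2)
    (hε₀ : 0 ≤ ε) (hε : ε ≤ 1 / 4) (hs₀ : 0 ≤ s) (hs : s ≤ 1 / 4) :
    u * ((‖w‖ : ℝ) ^ 2 + 1) + (ε : ℂ) * v * w - (s : ℂ) * z * (w - d) ≠ 0 := by
  intro h
  have hdominant : ‖u * ((‖w‖ : ℂ) ^ 2 + 1)‖ = ‖w‖ ^ 2 + 1 := by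
    rw [norm_mul, hu, one_mul]
    exact_mod_cast Complex.norm_of_nonneg (by positivity : (0 : ℝ) ≤ ‖w‖ ^ 2 + 1)
  have hperturbation : ‖(s : ℂ) * z * (w - d) - (ε : ℂ) * v * w‖ ≤ s * (‖w‖ + 2) + ε * ‖w‖ :=
    calc ‖(s : ℂ) * z * (w - d) - (ε : ℂ) * v * w‖
        ≤ ‖(s : ℂ) * z * (w - d)‖ + ‖(ε : ℂ) * v * w‖ := norm_sub_le _ _
      _ = s * ‖w - d‖ + ε * ‖w‖ := by
        simp only [norm_mul, hz, hv, Complex.norm_of_nonneg hs₀, Complex.norm_of_nonneg hε₀,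
          mul_one]
      _ ≤ s * (‖w‖ + 2) + ε * ‖w‖ := by
        gcongr
        exact (norm_sub_le w d).trans (by gcongr)
  have hbalance : u * ((‖w‖ : ℂ) ^ 2 + 1) = (s : ℂ) * z * (w - d) - (ε : ℂ) * v * w := by
    linear_combination h
  rw [hbalance] at hdominant
  have ht := norm_nonneg w
  nlinarith [sq_nonneg (‖w‖ - 1 / 4), mul_le_mul_of_nonneg_right hs ht,
    mul_le_mul_of_nonneg_right hε ht]

/-- There is `c > 0` with `(|w|²+1)/(|w|+1) ≥ c` for all `w : ℂ`; consequently there is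
`ε₀ > 0` such that for all `0 < ε < ε₀`, all `r > 0` and all real `θ`, setting
`w = r - 1/r + e^{iθ}`, one has
`e^{2iθ}(|w|²+1) + ε e^{iθ} w - √(2ε+ε²) e^{-iθ}(w - 2cos θ) ≠ 0`. -/
theorem stmt6 :
    (∃ c : ℝ, 0 < c ∧ ∀ w : ℂ, c ≤ (‖w‖ ^ 2 + 1) / (‖w‖ + 1)) ∧
    (∃ ε₀ : ℝ, 0 < ε₀ ∧ ∀ ε : ℝ, 0 < ε → ε < ε₀ → ∀ r : ℝ, 0 < r → ∀ θ : ℝ,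
      Complex.exp (2 * θ * Complex.I) *
          ((‖(r : ℂ) - 1 / (r : ℂ) + Complex.exp (θ * Complex.I)‖ : ℝ) ^ 2 + 1)
        + (ε : ℂ) * Complex.exp (θ * Complex.I) *
            ((r : ℂ) - 1 / (r : ℂ) + Complex.exp (θ * Complex.I))
        - (Real.sqrt (2 * ε + ε ^ 2) : ℂ) * Complex.exp (-θ * Complex.I) *
            (((r : ℂ) - 1 / (r : ℂ) + Complex.exp (θ * Complex.I)) - 2 * (Real.cos θ : ℂ))
        ≠ 0) := by
  refine ⟨⟨1 / 2, by norm_num, fun w => half_le_sq_add_one_div_add_one (norm_nonneg w)⟩,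
    ⟨1 / 40, by norm_num, fun ε hε₀ hε _ _ θ => ?_⟩⟩
  have hcos : ‖2 * (Real.cos θ : ℂ)‖ ≤ 2 := by
    rw [norm_mul, Complex.norm_real, Real.norm_eq_abs, Complex.norm_two]
    linarith [Real.abs_cos_le_one θ]
  exact unit_mul_norm_sq_add_one_add_perturbation_ne_zero
    (by exact_mod_cast norm_exp_ofReal_mul_I (2 * θ)) (norm_exp_ofReal_mul_I θ)
    (by exact_mod_cast norm_exp_ofReal_mul_I (-θ)) hcos hε₀.le (by linarith)
    (Real.sqrt_nonneg _) (sqrt_two_mul_add_sq_le_quarter hε₀.le hε.le)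
end

section
/- Let c ∈ ℝ, and let real numbers α₁ = -(1+c⁴)/(1+c²), β₂ = c² - 1, and α₃, α₄, β₃, β₄ satisfy α₃² - α₄² = (1+c²)² - α₁², β₃² - β₄² = (1+c²)² - β₂², and α₃β₃ = α₄β₄. Then no solution exists; i.e., the three equations are inconsistent. -/
/-!
Both right-hand sides are positive because `|α₁| < 1 + c²` and `|β₂| < 1 + c²` when `c ≠ 0`.
Hence `α₄² < α₃²` and `β₄² < β₃²`, so `(α₄β₄)² < (α₃β₃)²`, which is incompatible with `α₃β₃ = α₄β₄`.
-/

theorem mul_ne_mul_of_sq_lt_sq {R : Type*} [CommRing R] [LinearOrder R] [IsStrictOrderedRing R]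
    {a b a' b' : R} (ha : a' ^ 2 < a ^ 2) (hb : b' ^ 2 < b ^ 2) : a * b ≠ a' * b' := by
  intro h
  have hlt : (a' * b') ^ 2 < (a * b) ^ 2 := by
    rw [mul_pow, mul_pow]
    exact mul_lt_mul'' ha hb (sq_nonneg _) (sq_nonneg _)
  rw [h] at hlt
  exact hlt.false

theorem sq_neg_one_add_pow_four_div_lt {c : ℝ} (hc : c ≠ 0) :
    (-(1 + c ^ 4) / (1 + c ^ 2)) ^ 2 < (1 + c ^ 2) ^ 2 := by
  have hc2 : 0 < c ^ 2 := by positivity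
  have hlt : (1 + c ^ 4) / (1 + c ^ 2) < 1 + c ^ 2 := by
    rw [div_lt_iff₀ (by positivity)]
    nlinarith
  rw [neg_div, neg_sq]
  exact pow_lt_pow_left₀ hlt (by positivity) two_ne_zero

theorem sq_sq_sub_one_lt {c : ℝ} (hc : c ≠ 0) : (c ^ 2 - 1) ^ 2 < (1 + c ^ 2) ^ 2 := by
  have hc2 : 0 < c ^ 2 := by positivity
  exact sq_lt_sq' (by linarith) (by linarith)

/-- Inconsistency of the system in the two-regular-ends case: for real `c ≠ 0`, there are no
real numbers `α₃, α₄, β₃, β₄` with `α₃² - α₄² = (1+c²)² - α₁²`, `β₃² - β₄² = (1+c²)² - β₂²`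
and `α₃β₃ = α₄β₄`, where `α₁ = -(1+c⁴)/(1+c²)` and `β₂ = c² - 1`. -/
theorem stmt13 (c : ℝ) (hc : c ≠ 0) (α₁ β₂ α₃ α₄ β₃ β₄ : ℝ)
    (hα₁ : α₁ = -(1 + c ^ 4) / (1 + c ^ 2)) (hβ₂ : β₂ = c ^ 2 - 1)
    (e1 : α₃ ^ 2 - α₄ ^ 2 = (1 + c ^ 2) ^ 2 - α₁ ^ 2)
    (e2 : β₃ ^ 2 - β₄ ^ 2 = (1 + c ^ 2) ^ 2 - β₂ ^ 2)
    (e3 : α₃ * β₃ = α₄ * β₄) : False := by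
  have hα : α₄ ^ 2 < α₃ ^ 2 := by
    have := hα₁ ▸ sq_neg_one_add_pow_four_div_lt hc
    linarith
  have hβ : β₄ ^ 2 < β₃ ^ 2 := by
    have := hβ₂ ▸ sq_sq_sub_one_lt hc
    linarith
  exact mul_ne_mul_of_sq_lt_sq hα hβ e3
end

section
/- Let p(z) = z⁴ - (3+√3 i)z² - √3 i t z - √3 i for nonzero t ∈ ℂ. If p has roots z₀ = r e^{iθ} (r > 0) and -1/z̄₀, then -e^{2iθ} + √3 i e^{-2iθ} - (r - 1/r)² e^{2iθ} = -(3 + √3 i); equivalently, r² - 1 + 1/r² - √3 sin 4θ - 3 cos 2θ - √3 sin 2θ = 0 and √3 sin 2θ = cos 4θ + cos 2θ. -/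
/-!
Vieta's formulas for the depressed quartic give `e₁ = 0`, `e₂ = -(3 + √3 i)` and `e₄ = -√3 i`.
If `P` and `S` are the product and sum of the two known roots `z₀` and `-1/z̄₀`, the other two
roots have sum `-S` and product `e₄ / P`, so `e₂ = P - S² + e₄ / P`. For `z₀ = r e^{iθ}` we have
`P = -e^{2iθ}` and `S = (r - 1/r) e^{iθ}`, which is the complex identity; its real and imaginary
parts, combined with `cos² + sin² = 1`, give the two real ones.
-/

open Complex

theorem quartic_vieta {K : Type*} [Field K] [CharZero K] {a b c d x₁ x₂ x₃ x₄ : K}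
    (h : ∀ z, z ^ 4 + a * z ^ 3 + b * z ^ 2 + c * z + d
      = (z - x₁) * (z - x₂) * (z - x₃) * (z - x₄)) :
    x₁ + x₂ + x₃ + x₄ = -a ∧
      x₁ * x₂ + x₁ * x₃ + x₁ * x₄ + x₂ * x₃ + x₂ * x₄ + x₃ * x₄ = b ∧
      x₁ * x₂ * x₃ + x₁ * x₂ * x₄ + x₁ * x₃ * x₄ + x₂ * x₃ * x₄ = -c ∧
      x₁ * x₂ * x₃ * x₄ = d := by
  have h0 := h 0
  have h1 := h 1
  have hm1 := h (-1)
  have h2 := h 2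
  have hm2 := h (-2)
  refine ⟨?_, ?_, ?_, ?_⟩
  · linear_combination (h2 - hm2 - 2 * h1 + 2 * hm1) / 12
  · linear_combination h0 - (h1 + hm1) / 2
  · linear_combination (8 * h1 - 8 * hm1 - h2 + hm2) / 12
  · linear_combination -h0

theorem quadratic_coeff_eq_of_root_pair {K : Type*} [Field K] [CharZero K] {b c d x₁ x₂ x₃ x₄ : K}
    (h : ∀ z, z ^ 4 + b * z ^ 2 + c * z + d = (z - x₁) * (z - x₂) * (z - x₃) * (z - x₄))
    (hx : x₁ * x₂ ≠ 0) :
    x₁ * x₂ - (x₁ + x₂) ^ 2 + d / (x₁ * x₂) = b := by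
  obtain ⟨he1, he2, -, he4⟩ :=
    quartic_vieta (a := (0 : K)) (b := b) (c := c) (d := d) fun z => by rw [← h z]; ring
  have h34 : x₃ * x₄ = d / (x₁ * x₂) := by rw [eq_div_iff hx, ← he4]; ring
  linear_combination he2 - h34 - (x₁ + x₂) * he1

theorem neg_one_div_conj_ofReal_mul_exp (r θ : ℝ) :
    -1 / starRingEnd ℂ (r * exp (θ * I)) = -(1 / r : ℂ) * exp (θ * I) := by
  rw [map_mul, ← exp_conj, conj_ofReal, map_mul, conj_ofReal, conj_I, mul_neg, exp_neg]
  field_simp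

theorem re_im_of_neg_exp_add_mul_I_exp_neg_eq (q A x : ℝ)
    (h : -exp (x * I) + q * I * exp (-x * I) - A * exp (x * I) = -(3 + q * I)) :
    -Real.cos x + q * Real.sin x - A * Real.cos x + 3 = 0 ∧
      -Real.sin x + q * Real.cos x - A * Real.sin x + q = 0 := by
  rw [← ofReal_neg, exp_ofReal_mul_I, exp_ofReal_mul_I, Real.cos_neg, Real.sin_neg] at h
  have hre := congrArg re h
  have him := congrArg im h
  simp only [sub_re, sub_im, add_re, add_im, neg_re, neg_im, mul_re, mul_im, ofReal_re, ofReal_im,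
    I_re, I_im, re_ofNat, im_ofNat] at hre him
  constructor <;> linarith

theorem sqrt_three_trig_identities (A x : ℝ)
    (hre : -Real.cos x + √3 * Real.sin x - A * Real.cos x + 3 = 0)
    (him : -Real.sin x + √3 * Real.cos x - A * Real.sin x + √3 = 0) :
    A + 1 - √3 * Real.sin (2 * x) - 3 * Real.cos x - √3 * Real.sin x = 0 ∧
      √3 * Real.sin x = Real.cos (2 * x) + Real.cos x := by
  have hpyth := Real.sin_sq_add_cos_sq x
  have hsqrt : √3 * √3 = 3 := Real.mul_self_sqrt (by norm_num)
  rw [Real.sin_two_mul, Real.cos_two_mul]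
  constructor
  · linear_combination (-Real.cos x) * hre - Real.sin x * him - (1 + A) * hpyth
  · apply mul_left_cancel₀ (Real.sqrt_pos.mpr (by norm_num : (0:ℝ) < 3)).ne'
    linear_combination Real.sin x * hre - Real.cos x * him - √3 * hpyth + Real.sin x * hsqrt

theorem stmt17_general (t : ℂ) (r θ : ℝ) (hr : 0 < r) (z₀ z₁ z₂ : ℂ)
    (hz₀ : z₀ = (r : ℂ) * Complex.exp (θ * Complex.I))
    (hfact : ∀ z : ℂ,
      z ^ 4 - (3 + (Real.sqrt 3 : ℂ) * Complex.I) * z ^ 2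
          - (Real.sqrt 3 : ℂ) * Complex.I * t * z - (Real.sqrt 3 : ℂ) * Complex.I
        = (z - z₀) * (z - (-1 / starRingEnd ℂ z₀)) * (z - z₁) * (z - z₂)) :
    (-Complex.exp (2 * θ * Complex.I) +
        (Real.sqrt 3 : ℂ) * Complex.I * Complex.exp (-(2 * θ) * Complex.I) -
        ((r : ℂ) - 1 / (r : ℂ)) ^ 2 * Complex.exp (2 * θ * Complex.I)
      = -(3 + (Real.sqrt 3 : ℂ) * Complex.I)) ∧
    (r ^ 2 - 1 + 1 / r ^ 2 - Real.sqrt 3 * Real.sin (4 * θ)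
        - 3 * Real.cos (2 * θ) - Real.sqrt 3 * Real.sin (2 * θ) = 0) ∧
    (Real.sqrt 3 * Real.sin (2 * θ) = Real.cos (4 * θ) + Real.cos (2 * θ)) := by
  have hr₀ : (r : ℂ) ≠ 0 := by exact_mod_cast hr.ne'
  have hsq : exp (θ * I) ^ 2 = exp (2 * θ * I) := by rw [← exp_nat_mul]; ring_nf
  have hprod : z₀ * (-1 / starRingEnd ℂ z₀) = -exp (2 * θ * I) := by
    rw [hz₀, neg_one_div_conj_ofReal_mul_exp, ← hsq]
    field_simp
  have hsum : z₀ + -1 / starRingEnd ℂ z₀ = (r - 1 / r) * exp (θ * I) := by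
    rw [hz₀, neg_one_div_conj_ofReal_mul_exp]; ring
  have hpair := quadratic_coeff_eq_of_root_pair (b := -(3 + √3 * I)) (c := -(√3 * I * t))
    (d := -(√3 * I)) (fun z => by rw [← hfact z]; ring)
    (by rw [hprod]; exact neg_ne_zero.mpr (exp_ne_zero _))
  have hexp : exp (-(2 * θ) * I) = 1 / exp (2 * θ * I) := by rw [neg_mul, exp_neg, one_div]
  have hcomplex : -exp (2 * θ * I) + √3 * I * exp (-(2 * θ) * I)
      - ((r : ℂ) - 1 / r) ^ 2 * exp (2 * θ * I) = -(3 + √3 * I) := by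
    rw [hprod, hsum, mul_pow, hsq] at hpair
    rw [← hpair, hexp]
    field_simp
    ring
  obtain ⟨hre, him⟩ := re_im_of_neg_exp_add_mul_I_exp_neg_eq (√3) ((r - 1 / r) ^ 2) (2 * θ)
    (by push_cast; exact hcomplex)
  obtain ⟨h₁, h₂⟩ := sqrt_three_trig_identities _ _ hre him
  have hA : (r - 1 / r) ^ 2 + 1 = r ^ 2 - 1 + 1 / r ^ 2 := by field_simp; ring
  refine ⟨hcomplex, ?_, ?_⟩
  · rw [show 4 * θ = 2 * (2 * θ) by ring]
    linear_combination h₁ - hA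
  · rwa [show 4 * θ = 2 * (2 * θ) by ring]

/-- Vieta elimination for `p(z) = z⁴ - (3+√3 i)z² - √3 i t z - √3 i`: if `p` has roots
`z₀ = r e^{iθ}` (with `r > 0`) and `-1/z̄₀` together with two further roots `z₁, z₂`, then
`-e^{2iθ} + √3 i e^{-2iθ} - (r-1/r)² e^{2iθ} = -(3+√3 i)`; equivalently the two real
equations `r² - 1 + 1/r² - √3 sin 4θ - 3 cos 2θ - √3 sin 2θ = 0` and
`√3 sin 2θ = cos 4θ + cos 2θ` hold. -/
theorem stmt17 (t : ℂ) (ht : t ≠ 0) (r θ : ℝ) (hr : 0 < r) (z₀ z₁ z₂ : ℂ)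
    (hz₀ : z₀ = (r : ℂ) * Complex.exp (θ * Complex.I))
    (hfact : ∀ z : ℂ,
      z ^ 4 - (3 + (Real.sqrt 3 : ℂ) * Complex.I) * z ^ 2
          - (Real.sqrt 3 : ℂ) * Complex.I * t * z - (Real.sqrt 3 : ℂ) * Complex.I
        = (z - z₀) * (z - (-1 / starRingEnd ℂ z₀)) * (z - z₁) * (z - z₂)) :
    (-Complex.exp (2 * θ * Complex.I) +
        (Real.sqrt 3 : ℂ) * Complex.I * Complex.exp (-(2 * θ) * Complex.I) -
        ((r : ℂ) - 1 / (r : ℂ)) ^ 2 * Complex.exp (2 * θ * Complex.I)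
      = -(3 + (Real.sqrt 3 : ℂ) * Complex.I)) ∧
    (r ^ 2 - 1 + 1 / r ^ 2 - Real.sqrt 3 * Real.sin (4 * θ)
        - 3 * Real.cos (2 * θ) - Real.sqrt 3 * Real.sin (2 * θ) = 0) ∧
    (Real.sqrt 3 * Real.sin (2 * θ) = Real.cos (4 * θ) + Real.cos (2 * θ)) :=
  stmt17_general t r θ hr z₀ z₁ z₂ hz₀ hfact
end
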